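/- Per-block leave-p-out identity: let n ≥ 2, λ ⊆ {1,…,n} a block with n_λ := card(λ) ≥ 2, and p an integer with 1 ≤ p < n_λ. Let Y_1,…,Y_n be arbitrary real numbers, S_{λ,1} := Σ_{i∈λ} Y_i, S_{λ,2} := Σ_{i∈λ} Y_i². With V_λ(k) := Σ_{r≥1} r^k · C(n−p, r)·C(p, n_λ−r) / C(n, n_λ) for k ∈ {−1,0,1} (binomial coefficients being zero outside their range), A_λ := V_λ(0)·(1 − 1/n_λ) − V_λ(1)/n_λ + V_λ(−1), and B_λ := V_λ(1)·(2 − 1_{n_λ≥3})/(n_λ(n_λ−1)) + (V_λ(0)/(n_λ−1))·((1 + 1/n_λ)·1_{n_λ≥3} − 2) − V_λ(−1)·1_{n_λ≥3}/(n_λ−1), one has C(n,p)^{-1} Σ_{I_t ⊆ {1,…,n}, card(I_t)=n−p} Σ_{j∈λ, j∉I_t} (Y_j − mean{Y_i : i ∈ I_t ∩ λ})² = (A_λ − B_λ)·S_{λ,2} + B_λ·S_{λ,1}². -/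

import Mathlib

/-!
Only `It ∩ λ` enters the summand, and a given `A ⊆ λ` with `#A = r` is cut out by
`C(n − n_λ, n − p − r)` training sets; divided by `C(n, p)` and multiplied by the `C(n_λ, r)`
choices of `A`, this is the hypergeometric weight `C(n − p, r) C(p, n_λ − r) / C(n, n_λ)`
of `V_λ`. For fixed `r` the error of the training mean of `A` is a quadratic expression in
`∑_A Y²`, `∑_A Y` and `S_{λ,1}`, `S_{λ,2}`; summing it over the `r`-subsets of `λ` by double
counting (a point lies in `C(n_λ − 1, r − 1)` of them, a pair in `C(n_λ − 2, r − 2)`) gives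
`C(n_λ, r) ((a_r − b_r) S_{λ,2} + b_r S_{λ,1}²)`, where `A_λ` and `B_λ` are the hypergeometric
means of `a_r` (`coefA`) and `b_r` (`coefB`). The indicator `1_{n_λ ≥ 3}` in `B_λ` is
immaterial: for `n_λ = 2` both forms of `b_r` agree at the only relevant sizes `r = 1, 2`.
-/

open Finset

namespace LpoPerBlock

/-- `V_λ(k) = ∑_{r ≥ 1} r^k C(n−p, r) C(p, n_λ−r) / C(n, n_λ)`, binomial coefficients
being zero outside their range (all terms with `r > n` vanish). -/
noncomputable def Vcoef (n p nl : ℕ) (k : ℤ) : ℝ :=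
  ∑ r ∈ Finset.Icc 1 n,
    (r : ℝ) ^ k * ((n - p).choose r : ℝ) *
      (if r ≤ nl then ((p.choose (nl - r)) : ℝ) else 0) / ((n.choose nl) : ℝ)

/-- `A_λ = V_λ(0)(1 − 1/n_λ) − V_λ(1)/n_λ + V_λ(−1)`. -/
noncomputable def Acoef (n p nl : ℕ) : ℝ :=
  Vcoef n p nl 0 * (1 - 1 / (nl : ℝ)) - Vcoef n p nl 1 / (nl : ℝ) + Vcoef n p nl (-1)

/-- `B_λ = V_λ(1)(2 − 1_{n_λ≥3})/(n_λ(n_λ−1)) + (V_λ(0)/(n_λ−1))((1 + 1/n_λ)1_{n_λ≥3} − 2)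
          − V_λ(−1)·1_{n_λ≥3}/(n_λ−1)`. -/
noncomputable def Bcoef (n p nl : ℕ) : ℝ :=
  Vcoef n p nl 1 * (2 - if 3 ≤ nl then (1 : ℝ) else 0) / ((nl : ℝ) * ((nl : ℝ) - 1))
    + Vcoef n p nl 0 / ((nl : ℝ) - 1) *
        ((1 + 1 / (nl : ℝ)) * (if 3 ≤ nl then (1 : ℝ) else 0) - 2)
    - Vcoef n p nl (-1) * (if 3 ≤ nl then (1 : ℝ) else 0) / ((nl : ℝ) - 1)

noncomputable def hypergeomWeight (n p c r : ℕ) : ℝ :=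
  (n - p).choose r * p.choose (c - r) / n.choose c

noncomputable def coefA (c r : ℕ) : ℝ := 1 - 1 / c - r / c + (r : ℝ)⁻¹

noncomputable def coefB (c r : ℕ) : ℝ := -((c - r) * (r + 1)) / (r * c * (c - 1))

def extensionCount (u m r : ℕ) : ℕ := if r ≤ m then u.choose (m - r) else 0

theorem choose_mul_choose_sub_comm (N a b : ℕ) :
    N.choose a * (N - a).choose b = N.choose b * (N - b).choose a := by
  by_cases hab : a + b ≤ N
  · have ha := Nat.choose_mul (n := N) (Nat.le_add_right a b)
    have hb := Nat.choose_mul (n := N) (Nat.le_add_left b a)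
    rw [Nat.add_sub_cancel_left] at ha
    rw [Nat.add_sub_cancel] at hb
    rw [← ha, ← hb, Nat.choose_symm_add]
  · have hzero : ∀ x y, N < x + y → N.choose x * (N - x).choose y = 0 := fun x y h => by
      simp only [mul_eq_zero, Nat.choose_eq_zero_iff]
      omega
    rw [hzero a b (by omega), hzero b a (by omega)]

theorem choose_mul_choose_mul_choose_sub_comm {n c m r : ℕ} (hrc : r ≤ c) (hrm : r ≤ m) :
    n.choose c * c.choose r * (n - c).choose (m - r)
      = n.choose m * m.choose r * (n - m).choose (c - r) := by
  rw [Nat.choose_mul hrc, Nat.choose_mul hrm, mul_assoc, mul_assoc]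
  congr 1
  have h := choose_mul_choose_sub_comm (n - r) (c - r) (m - r)
  rwa [show n - r - (c - r) = n - c by omega, show n - r - (m - r) = n - m by omega] at h

theorem hypergeomWeight_eq {n p c r : ℕ} (hp : p ≤ n) (hc : c ≤ n) (hr : r ≤ c) :
    hypergeomWeight n p c r
      = (n.choose p : ℝ)⁻¹ * extensionCount (n - c) (n - p) r * c.choose r := by
  rw [hypergeomWeight, extensionCount]
  split_ifs with hrm
  · have h := choose_mul_choose_mul_choose_sub_comm (n := n) (m := n - p) hr hrm
    rw [Nat.choose_symm hp, Nat.sub_sub_self hp] at h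
    have hnp : (n.choose p : ℝ) ≠ 0 := by exact_mod_cast (Nat.choose_pos hp).ne'
    have hnc : (n.choose c : ℝ) ≠ 0 := by exact_mod_cast (Nat.choose_pos hc).ne'
    field_simp
    exact_mod_cast (by linarith [h] : _)
  · rw [Nat.choose_eq_zero_of_lt (not_le.mp hrm)]
    simp

theorem Vcoef_eq_sum {n p c : ℕ} (hc : c ≤ n) (k : ℤ) :
    Vcoef n p c k = ∑ r ∈ Icc 1 c, (r : ℝ) ^ k * hypergeomWeight n p c r := by
  have hzero : ∀ r ∈ Icc 1 n, r ∉ Icc 1 c →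
      (r : ℝ) ^ k * (n - p).choose r * (if r ≤ c then (p.choose (c - r) : ℝ) else 0)
        / n.choose c = 0 := fun r hrn hrc => by
    rw [if_neg fun h => hrc (mem_Icc.mpr ⟨(mem_Icc.mp hrn).1, h⟩), mul_zero, zero_div]
  rw [Vcoef, ← sum_subset (Icc_subset_Icc_right hc) hzero]
  refine sum_congr rfl fun r hr => ?_
  rw [if_pos (mem_Icc.mp hr).2, hypergeomWeight]
  ring

theorem Acoef_eq_sum {n p c : ℕ} (hc : c ≤ n) :
    Acoef n p c = ∑ r ∈ Icc 1 c, hypergeomWeight n p c r * coefA c r := by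
  simp only [Acoef, coefA, Vcoef_eq_sum hc, sum_mul, sum_div, ← sum_sub_distrib,
    ← sum_add_distrib]
  refine sum_congr rfl fun r _ => ?_
  rw [zpow_zero, zpow_one, zpow_neg_one]
  ring

theorem Bcoef_eq_sum {n p c : ℕ} (hc2 : 2 ≤ c) (hc : c ≤ n) :
    Bcoef n p c = ∑ r ∈ Icc 1 c, hypergeomWeight n p c r * coefB c r := by
  simp only [Bcoef, Vcoef_eq_sum hc, sum_mul, sum_div, ← sum_sub_distrib, ← sum_add_distrib]
  refine sum_congr rfl fun r hr => ?_
  obtain ⟨hr1, hrc⟩ := mem_Icc.mp hr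
  have hr0 : (r : ℝ) ≠ 0 := by positivity
  have hc1 : (c : ℝ) - 1 ≠ 0 := by
    have : (2 : ℝ) ≤ c := by exact_mod_cast hc2
    linarith
  rw [zpow_zero, zpow_one, zpow_neg_one, coefB]
  split_ifs with hc3
  · field_simp
    ring
  · obtain rfl : c = 2 := by omega
    obtain rfl | rfl : r = 1 ∨ r = 2 := by omega
    all_goals (norm_num; ring)

theorem sum_sum_eq_sum_card_filter_mul {α κ : Type*} [DecidableEq κ] (S : Finset α)
    (t : α → Finset κ) {T : Finset κ} (htT : ∀ a ∈ S, t a ⊆ T) (g : κ → ℝ) :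
    ∑ a ∈ S, ∑ x ∈ t a, g x = ∑ x ∈ T, #{a ∈ S | x ∈ t a} * g x := by
  rw [sum_comm' (t' := T) (s' := fun x => {a ∈ S | x ∈ t a})]
  · simp only [sum_const, nsmul_eq_mul]
  · intro a x
    rw [mem_filter]
    exact ⟨fun h => ⟨h, htT a h.1 h.2⟩, And.left⟩

section Subsets

variable {ι : Type*} [DecidableEq ι]

theorem choose_card_mul_card_filter_powersetCard_subset {s t : Finset ι} (hts : t ⊆ s)
    (r : ℕ) : (#s).choose #t * #{A ∈ s.powersetCard r | t ⊆ A} = (#s).choose r * r.choose #t := by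
  by_cases htr : #t ≤ r
  · rw [card_filter_powersetCard_subset t s r hts htr, Nat.choose_mul htr]
  · have hempty : {A ∈ s.powersetCard r | t ⊆ A} = ∅ :=
      filter_eq_empty_iff.mpr fun A hA htA =>
        htr ((card_le_card htA).trans (mem_powersetCard.mp hA).2.le)
    rw [hempty, Nat.choose_eq_zero_of_lt (not_le.mp htr), card_empty, mul_zero, mul_zero]

theorem card_mul_card_filter_powersetCard_mem {s : Finset ι} {i : ι} (hi : i ∈ s) (r : ℕ) :
    (#s : ℝ) * #{A ∈ s.powersetCard r | i ∈ A} = r * (#s).choose r := by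
  have h := choose_card_mul_card_filter_powersetCard_subset (singleton_subset_iff.mpr hi) r
  simp only [card_singleton, Nat.choose_one_right, singleton_subset_iff] at h
  rw [mul_comm (r : ℝ)]
  exact_mod_cast h

theorem card_mul_card_filter_powersetCard_mem_mem {s : Finset ι} {i j : ι} (hi : i ∈ s)
    (hj : j ∈ s) (r : ℕ) :
    (#s : ℝ) * (#s - 1) * #{A ∈ s.powersetCard r | i ∈ A ∧ j ∈ A}
      = r * (#s).choose r * ((r - 1) + if i = j then (#s : ℝ) - r else 0) := by
  by_cases hij : i = j
  · subst hij
    simp only [and_self, if_pos]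
    rw [mul_right_comm, card_mul_card_filter_powersetCard_mem hi]
    ring
  · have h := choose_card_mul_card_filter_powersetCard_subset
      (insert_subset hi (singleton_subset_iff.mpr hj)) r
    simp only [card_pair hij, insert_subset_iff, singleton_subset_iff] at h
    rw [← Nat.cast_inj (R := ℝ)] at h
    push_cast [Nat.cast_choose_two] at h
    rw [if_neg hij]
    linear_combination 2 * h

theorem card_mul_sum_powersetCard_sum (s : Finset ι) (r : ℕ) (f : ι → ℝ) :
    #s * ∑ A ∈ s.powersetCard r, ∑ i ∈ A, f i = r * (#s).choose r * ∑ i ∈ s, f i := by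
  rw [sum_sum_eq_sum_card_filter_mul _ (fun A => A) fun A hA => (mem_powersetCard.mp hA).1,
    mul_sum, mul_sum]
  refine sum_congr rfl fun i hi => ?_
  rw [← mul_assoc, card_mul_card_filter_powersetCard_mem hi]

theorem card_mul_sum_powersetCard_sq_sum (s : Finset ι) (r : ℕ) (f : ι → ℝ) :
    #s * (#s - 1) * ∑ A ∈ s.powersetCard r, (∑ i ∈ A, f i) ^ 2
      = r * (#s).choose r * ((#s - r) * ∑ i ∈ s, f i ^ 2 + (r - 1) * (∑ i ∈ s, f i) ^ 2) := by
  simp only [sq, sum_mul_sum, ← sum_product']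
  rw [sum_sum_eq_sum_card_filter_mul _ (fun A => A ×ˢ A)
    fun A hA => product_subset_product (mem_powersetCard.mp hA).1 (mem_powersetCard.mp hA).1]
  simp only [mem_product, mul_sum, sum_product]
  calc ∑ i ∈ s, ∑ j ∈ s, (#s : ℝ) * (#s - 1) *
        (#{A ∈ s.powersetCard r | i ∈ A ∧ j ∈ A} * (f i * f j))
      = ∑ i ∈ s, ∑ j ∈ s, r * (#s).choose r *
          (((r : ℝ) - 1) * (f i * f j) + if i = j then ((#s : ℝ) - r) * (f i * f j) else 0) := by
        refine sum_congr rfl fun i hi => sum_congr rfl fun j hj => ?_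
        rw [← mul_assoc, card_mul_card_filter_powersetCard_mem_mem hi hj]
        split_ifs <;> ring
    _ = _ := by
        simp only [← mul_sum, sum_add_distrib, sum_ite_eq, ← sum_mul]
        rw [sum_ite_of_true fun _ hi => hi, ← mul_sum]
        ring

theorem card_filter_powersetCard_inter_eq {U s A : Finset ι} (hsU : s ⊆ U) (hAs : A ⊆ s)
    (m : ℕ) :
    #{B ∈ U.powersetCard m | B ∩ s = A} = extensionCount (#U - #s) m #A := by
  rw [extensionCount]
  split_ifs with hAm
  · rw [← card_sdiff_of_subset hsU, ← card_powersetCard]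
    refine card_nbij' (· \ s) (A ∪ ·) ?_ ?_ ?_ ?_
    · intro B hB
      simp only [mem_coe, mem_filter, mem_powersetCard] at hB ⊢
      obtain ⟨⟨hBU, hBm⟩, hBs⟩ := hB
      refine ⟨sdiff_subset_sdiff hBU le_rfl, ?_⟩
      have := card_inter_add_card_sdiff B s
      rw [hBs] at this
      omega
    · intro C hC
      simp only [mem_coe, mem_filter, mem_powersetCard, subset_sdiff] at hC ⊢
      obtain ⟨⟨hCU, hCs⟩, hCm⟩ := hC
      refine ⟨⟨union_subset (hAs.trans hsU) hCU, ?_⟩, ?_⟩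
      · rw [card_union_of_disjoint (hCs.symm.mono_left hAs)]
        omega
      · rw [union_inter_distrib_right, inter_eq_left.mpr hAs,
          disjoint_iff_inter_eq_empty.mp hCs, union_empty]
    · intro B hB
      simp only [mem_coe, mem_filter] at hB
      simp only
      rw [← hB.2, union_comm, sdiff_union_inter]
    · intro C hC
      simp only [mem_coe, mem_powersetCard, subset_sdiff] at hC
      simp only
      rw [union_sdiff_distrib, sdiff_eq_empty_iff_subset.mpr hAs, empty_union,
        sdiff_eq_self_of_disjoint hC.1.2]
  · refine card_eq_zero.mpr (filter_eq_empty_iff.mpr fun B hB hBA => hAm ?_)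
    rw [← hBA, ← (mem_powersetCard.mp hB).2]
    exact card_le_card inter_subset_left

noncomputable def heldOutSqError (s A : Finset ι) (Y : ι → ℝ) : ℝ :=
  ∑ j ∈ s \ A, (Y j - (∑ i ∈ A, Y i) / #A) ^ 2

theorem heldOutSqError_eq {s A : Finset ι} (hAs : A ⊆ s) (hA : A.Nonempty) (Y : ι → ℝ) :
    heldOutSqError s A Y
      = ∑ i ∈ s, Y i ^ 2 - ∑ i ∈ A, Y i ^ 2 - 2 / #A * (∑ i ∈ A, Y i) * ∑ i ∈ s, Y i
        + (#s + #A) / #A ^ 2 * (∑ i ∈ A, Y i) ^ 2 := by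
  have hA0 : (#A : ℝ) ≠ 0 := by exact_mod_cast hA.card_pos.ne'
  simp only [heldOutSqError, sub_sq, sum_add_distrib, sum_sub_distrib, ← sum_mul, ← mul_sum,
    sum_const, nsmul_eq_mul, sum_sdiff_eq_sub hAs]
  field_simp
  ring

theorem sum_powersetCard_heldOutSqError {s : Finset ι} (hs : 2 ≤ #s) {r : ℕ} (hr : 1 ≤ r)
    (Y : ι → ℝ) :
    ∑ A ∈ s.powersetCard r, heldOutSqError s A Y
      = (#s).choose r * ((coefA #s r - coefB #s r) * ∑ i ∈ s, Y i ^ 2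
          + coefB #s r * (∑ i ∈ s, Y i) ^ 2) := by
  have hc : (#s : ℝ) ≠ 0 := by positivity
  have hc1 : (#s : ℝ) - 1 ≠ 0 := by
    have : (2 : ℝ) ≤ #s := by exact_mod_cast hs
    linarith
  have hr0 : (r : ℝ) ≠ 0 := by positivity
  rw [sum_congr rfl fun A hA => by
    obtain ⟨hAs, hAr⟩ := mem_powersetCard.mp hA
    rw [heldOutSqError_eq hAs (card_pos.mp (by omega)), hAr]]
  simp only [sum_add_distrib, sum_sub_distrib, sum_const, card_powersetCard, nsmul_eq_mul,
    ← mul_sum, ← sum_mul]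
  rw [eq_div_of_mul_eq hc ((mul_comm _ _).trans (card_mul_sum_powersetCard_sum s r (Y · ^ 2))),
    eq_div_of_mul_eq hc ((mul_comm _ _).trans (card_mul_sum_powersetCard_sum s r Y)),
    eq_div_of_mul_eq (mul_ne_zero hc hc1)
      ((mul_comm _ _).trans (card_mul_sum_powersetCard_sq_sum s r Y))]
  unfold coefA coefB
  field_simp
  ring

theorem sum_powersetCard_heldOutSqError_inter {U s : Finset ι} (hsU : s ⊆ U) {m : ℕ}
    (hm : #U - #s < m) (Y : ι → ℝ) :
    ∑ B ∈ U.powersetCard m, heldOutSqError s (B ∩ s) Y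
      = ∑ r ∈ Icc 1 #s, extensionCount (#U - #s) m r *
          ∑ A ∈ s.powersetCard r, heldOutSqError s A Y := by
  rw [← sum_fiberwise_of_maps_to (g := (· ∩ s)) (t := s.powerset)
    fun B _ => mem_powerset.mpr inter_subset_right]
  calc ∑ A ∈ s.powerset, ∑ B ∈ U.powersetCard m with B ∩ s = A, heldOutSqError s (B ∩ s) Y
      = ∑ A ∈ s.powerset, extensionCount (#U - #s) m #A * heldOutSqError s A Y := by
        refine sum_congr rfl fun A hA => ?_
        rw [sum_congr rfl fun B hB => by rw [(mem_filter.mp hB).2], sum_const,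
          card_filter_powersetCard_inter_eq hsU (mem_powerset.mp hA), nsmul_eq_mul]
    _ = ∑ r ∈ range (#s + 1), extensionCount (#U - #s) m r *
          ∑ A ∈ s.powersetCard r, heldOutSqError s A Y := by
        rw [sum_powerset]
        refine sum_congr rfl fun r _ => ?_
        rw [mul_sum]
        exact sum_congr rfl fun A hA => by rw [(mem_powersetCard.mp hA).2]
    _ = _ := by
        refine (sum_subset (fun r hr => mem_range.mpr (Nat.lt_succ_of_le (mem_Icc.mp hr).2))
          fun r hr hr' => ?_).symm
        obtain rfl : r = 0 := by
          simp only [mem_range, mem_Icc] at hr hr'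
          omega
        rw [extensionCount, if_pos (Nat.zero_le m), Nat.sub_zero, Nat.choose_eq_zero_of_lt hm,
          Nat.cast_zero, zero_mul]

end Subsets

theorem lpo_per_block_identity_general {n : ℕ}
    (lam : Finset (Fin n)) (hlam : 2 ≤ lam.card)
    (p : ℕ) (hp2 : p < lam.card) (Y : Fin n → ℝ) :
    ((n.choose p : ℝ))⁻¹ *
        ∑ It ∈ Finset.powersetCard (n - p) (Finset.univ : Finset (Fin n)),
          ∑ j ∈ lam \ It,
            (Y j - (∑ i ∈ It ∩ lam, Y i) / ((It ∩ lam).card : ℝ)) ^ 2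
      = (Acoef n p lam.card - Bcoef n p lam.card) * (∑ i ∈ lam, Y i ^ 2)
        + Bcoef n p lam.card * (∑ i ∈ lam, Y i) ^ 2 := by
  have hcn : #lam ≤ n := by simpa using card_le_univ lam
  have hsummand : ∀ It : Finset (Fin n), ∑ j ∈ lam \ It,
      (Y j - (∑ i ∈ It ∩ lam, Y i) / ((It ∩ lam).card : ℝ)) ^ 2
        = heldOutSqError lam (It ∩ lam) Y := fun It => by
    rw [heldOutSqError, sdiff_inter_self_right]
  have hregroup := sum_powersetCard_heldOutSqError_inter (subset_univ lam) (m := n - p)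
    (by rw [card_fin]; omega) Y
  rw [card_fin] at hregroup
  rw [sum_congr rfl fun It _ => hsummand It, hregroup, mul_sum, Acoef_eq_sum hcn,
    Bcoef_eq_sum hlam hcn, ← sum_sub_distrib, sum_mul, sum_mul, ← sum_add_distrib]
  refine sum_congr rfl fun r hr => ?_
  obtain ⟨hr1, hrc⟩ := mem_Icc.mp hr
  rw [sum_powersetCard_heldOutSqError hlam hr1, ← mul_assoc, ← mul_assoc,
    ← hypergeomWeight_eq (by omega) hcn hrc]
  ring

/-- **Per-block leave-`p`-out identity.**  For a block `lam ⊆ {1,…,n}` with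
`n_λ = card lam ≥ 2` and `1 ≤ p < n_λ`, averaging over all training sets `It` of
cardinality `n − p` the squared prediction errors of the within-block training mean on
the validation points of `lam` gives `(A_λ − B_λ) S_{λ,2} + B_λ S_{λ,1}²`. -/
theorem lpo_per_block_identity {n : ℕ} (hn : 2 ≤ n)
    (lam : Finset (Fin n)) (hlam : 2 ≤ lam.card)
    (p : ℕ) (hp1 : 1 ≤ p) (hp2 : p < lam.card) (Y : Fin n → ℝ) :
    ((n.choose p : ℝ))⁻¹ *
        ∑ It ∈ Finset.powersetCard (n - p) (Finset.univ : Finset (Fin n)),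
          ∑ j ∈ lam \ It,
            (Y j - (∑ i ∈ It ∩ lam, Y i) / ((It ∩ lam).card : ℝ)) ^ 2
      = (Acoef n p lam.card - Bcoef n p lam.card) * (∑ i ∈ lam, Y i ^ 2)
        + Bcoef n p lam.card * (∑ i ∈ lam, Y i) ^ 2 :=
  lpo_per_block_identity_general lam hlam p hp2 Y

end LpoPerBlock
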